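/- arXiv:2511.02867 — 5 statements merged into one kernel-verified Lean document; each statement's English description precedes it below -/
import Mathlib

section
/- For any fixed t ≥ 0, the function s ↦ Z_s Z_{t-s} / Z_t on [0, t] is decreasing on [0, t/2] and increasing on [t/2, t]. In particular its minimum over [0,t] is Z_{t/2}² / Z_t. -/
/-!
Hölder's inequality with exponents `p + q = 1` makes `t ↦ log Z_t` convex on `[0, ∞)`, where `Z`
is finite and positive because `μ` is a probability measure living on some `[c, ∞)`. A convex `φ`
satisfies `φ x + φ y ≤ φ a + φ b` whenever `x + y = a + b` and `x ∈ [a, b]`; applied to `log Z`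
with both pairs summing to `t`, this says that `Z_s Z_{t-s}` grows as `s` moves away from `t / 2`.
-/

open MeasureTheory Real Set

/-- Laplace transform of a measure on ℝ. -/
noncomputable def lapZ (μ : Measure ℝ) (t : ℝ) : ℝ := ∫ x, Real.exp (-t * x) ∂μ

theorem MeasureTheory.integral_rpow_mul_rpow_le {α : Type*} [MeasurableSpace α] {μ : Measure α}
    {f g : α → ℝ} (hf₀ : 0 ≤ᵐ[μ] f) (hg₀ : 0 ≤ᵐ[μ] g) (hf : Integrable f μ) (hg : Integrable g μ)
    {p q : ℝ} (hp : 0 ≤ p) (hq : 0 ≤ q) (hpq : p + q = 1) :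
    ∫ a, f a ^ p * g a ^ q ∂μ ≤ (∫ a, f a ∂μ) ^ p * (∫ a, g a ∂μ) ^ q := by
  have hofReal : ∀ᵐ a ∂μ, ENNReal.ofReal (f a ^ p * g a ^ q) =
      ENNReal.ofReal (f a) ^ p * ENNReal.ofReal (g a) ^ q := by
    filter_upwards [hf₀, hg₀] with a ha hb
    rw [ENNReal.ofReal_mul (rpow_nonneg ha p), ENNReal.ofReal_rpow_of_nonneg ha hp,
      ENNReal.ofReal_rpow_of_nonneg hb hq]
  have hholder := ENNReal.lintegral_mul_norm_pow_le hf.aemeasurable.ennreal_ofReal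
    hg.aemeasurable.ennreal_ofReal hp hq hpq
  rw [← ofReal_integral_eq_lintegral_ofReal hf hf₀, ← ofReal_integral_eq_lintegral_ofReal hg hg₀,
    ← lintegral_congr_ae hofReal] at hholder
  rw [integral_eq_lintegral_of_nonneg_ae (f := fun a => f a ^ p * g a ^ q)
    (by filter_upwards [hf₀, hg₀] with a ha hb
        using mul_nonneg (rpow_nonneg ha p) (rpow_nonneg hb q))
    ((hf.aemeasurable.pow_const p).mul (hg.aemeasurable.pow_const q)).aestronglyMeasurable]
  refine (ENNReal.toReal_mono (by finiteness) hholder).trans_eq ?_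
  rw [ENNReal.toReal_mul, ← ENNReal.toReal_rpow, ← ENNReal.toReal_rpow,
    ENNReal.toReal_ofReal (integral_nonneg_of_ae hf₀),
    ENNReal.toReal_ofReal (integral_nonneg_of_ae hg₀)]

theorem ConvexOn.map_add_map_le_of_add_eq {s : Set ℝ} {f : ℝ → ℝ} (hf : ConvexOn ℝ s f)
    {a b x y : ℝ} (ha : a ∈ s) (hb : b ∈ s) (hx : x ∈ Icc a b) (hxy : x + y = a + b) :
    f x + f y ≤ f a + f b := by
  obtain ⟨hax, hxb⟩ := hx
  rcases (hax.trans hxb).eq_or_lt with rfl | hab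
  · obtain rfl : x = a := le_antisymm hxb hax
    obtain rfl : y = x := by linarith
    rfl
  have hd : 0 < b - a := sub_pos.2 hab
  set p := (b - x) / (b - a)
  set q := (x - a) / (b - a)
  have hp : 0 ≤ p := div_nonneg (by linarith) hd.le
  have hq : 0 ≤ q := div_nonneg (by linarith) hd.le
  have hpq : p + q = 1 := by rw [← add_div, div_eq_one_iff_eq hd.ne']; ring
  have hx' : p • a + q • b = x := by simp only [p, q, smul_eq_mul]; field_simp; ring
  have hy' : q • a + p • b = y := by
    rw [show y = a + b - x by linarith]; simp only [p, q, smul_eq_mul]; field_simp; ring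
  have h₁ := hf.2 ha hb hp hq hpq
  have h₂ := hf.2 ha hb hq hp (by linarith)
  rw [hx'] at h₁
  rw [hy'] at h₂
  simp only [smul_eq_mul] at h₁ h₂
  linear_combination h₁ + h₂ + (f a + f b) * hpq

theorem lapZ_nonneg (μ : Measure ℝ) (t : ℝ) : 0 ≤ lapZ μ t :=
  integral_nonneg fun _ => (exp_pos _).le

section LogConvex

variable {μ : Measure ℝ}

theorem lapZ_pos [NeZero μ] {t : ℝ} (ht : Integrable (fun x => exp (-t * x)) μ) : 0 < lapZ μ t :=
  integral_exp_pos ht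

theorem integrable_exp_neg_mul_of_ae_le [IsFiniteMeasure μ] {c s : ℝ} (hc : ∀ᵐ x ∂μ, c ≤ x)
    (hs : 0 ≤ s) : Integrable (fun x => exp (-s * x)) μ := by
  refine .of_bound (by fun_prop) (exp (-s * c)) (hc.mono fun x hx => ?_)
  rw [norm_of_nonneg (exp_pos _).le, exp_le_exp]
  nlinarith

theorem lapZ_le_rpow_mul_rpow {a b p q : ℝ} (ha : Integrable (fun x => exp (-a * x)) μ)
    (hb : Integrable (fun x => exp (-b * x)) μ) (hp : 0 ≤ p) (hq : 0 ≤ q) (hpq : p + q = 1) :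
    lapZ μ (p * a + q * b) ≤ lapZ μ a ^ p * lapZ μ b ^ q := by
  refine le_of_eq_of_le (integral_congr_ae (.of_forall fun x => ?_))
    (integral_rpow_mul_rpow_le (.of_forall fun _ => (exp_pos _).le)
      (.of_forall fun _ => (exp_pos _).le) ha hb hp hq hpq)
  simp only [← exp_mul, ← exp_add]
  ring_nf

theorem convexOn_log_lapZ [IsFiniteMeasure μ] [NeZero μ] {c : ℝ} (hc : ∀ᵐ x ∂μ, c ≤ x) :
    ConvexOn ℝ (Ici 0) (fun t => log (lapZ μ t)) := by
  refine ⟨convex_Ici 0, fun a ha b hb p q hp hq hpq => ?_⟩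
  have hia := integrable_exp_neg_mul_of_ae_le hc ha
  have hib := integrable_exp_neg_mul_of_ae_le hc hb
  have hpos := lapZ_pos (integrable_exp_neg_mul_of_ae_le hc
    (add_nonneg (mul_nonneg hp ha) (mul_nonneg hq hb)))
  simp only [smul_eq_mul]
  rw [← log_rpow (lapZ_pos hia), ← log_rpow (lapZ_pos hib),
    ← log_mul (rpow_pos_of_pos (lapZ_pos hia) p).ne' (rpow_pos_of_pos (lapZ_pos hib) q).ne']
  exact log_le_log hpos (lapZ_le_rpow_mul_rpow hia hib hp hq hpq)

theorem lapZ_mul_le_lapZ_mul [IsFiniteMeasure μ] [NeZero μ] {c : ℝ} (hc : ∀ᵐ x ∂μ, c ≤ x)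
    {a b x y : ℝ} (ha : 0 ≤ a) (hx : x ∈ Icc a b) (hxy : x + y = a + b) :
    lapZ μ x * lapZ μ y ≤ lapZ μ a * lapZ μ b := by
  have hpos : ∀ {s}, a ≤ s → 0 < lapZ μ s := fun h =>
    lapZ_pos (integrable_exp_neg_mul_of_ae_le hc (ha.trans h))
  have hab : a ≤ b := hx.1.trans hx.2
  have hay : a ≤ y := by linarith [hx.2]
  rw [← log_le_log_iff (mul_pos (hpos hx.1) (hpos hay)) (mul_pos (hpos le_rfl) (hpos hab)),
    log_mul (hpos hx.1).ne' (hpos hay).ne', log_mul (hpos le_rfl).ne' (hpos hab).ne']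
  exact (convexOn_log_lapZ hc).map_add_map_le_of_add_eq ha (ha.trans hab) hx hxy

end LogConvex

theorem stmt_1_general (μ : Measure ℝ) [IsProbabilityMeasure μ]
    (hbdd : ∃ c : ℝ, μ (Set.Iio c) = 0) (t : ℝ) :
    AntitoneOn (fun s => lapZ μ s * lapZ μ (t - s) / lapZ μ t) (Set.Icc 0 (t / 2))
      ∧ MonotoneOn (fun s => lapZ μ s * lapZ μ (t - s) / lapZ μ t) (Set.Icc (t / 2) t)
      ∧ ∀ s ∈ Set.Icc 0 t,
          lapZ μ (t / 2) ^ 2 / lapZ μ t ≤ lapZ μ s * lapZ μ (t - s) / lapZ μ t := by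
  obtain ⟨c, hc⟩ := hbdd
  have hae : ∀ᵐ x ∂μ, c ≤ x := by simp only [ae_iff, not_le]; exact hc
  refine ⟨fun s hs s' hs' hss' => ?_, fun s hs s' hs' hss' => ?_, fun s hs => ?_⟩ <;>
    refine div_le_div_of_nonneg_right ?_ (lapZ_nonneg μ t)
  · exact lapZ_mul_le_lapZ_mul hae hs.1 ⟨hss', by linarith [hs.2, hs'.2]⟩ (by ring)
  · rw [mul_comm (lapZ μ s), mul_comm (lapZ μ s')]
    exact lapZ_mul_le_lapZ_mul hae (sub_nonneg.2 hs'.2)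
      ⟨by linarith, by linarith [hs.1, hs'.1]⟩ (by ring)
  · rw [sq]
    rcases le_total s (t - s) with h | h
    · exact lapZ_mul_le_lapZ_mul hae hs.1 ⟨by linarith, by linarith⟩ (by ring)
    · rw [mul_comm (lapZ μ s)]
      exact lapZ_mul_le_lapZ_mul hae (sub_nonneg.2 hs.2) ⟨by linarith, by linarith⟩ (by ring)

/-- For fixed `t ≥ 0`, the function `s ↦ Z_s Z_{t-s} / Z_t` is decreasing
on `[0, t/2]` and increasing on `[t/2, t]`; in particular its minimum on `[0,t]` is
`Z_{t/2}² / Z_t`. -/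
theorem stmt_1 (μ : Measure ℝ) [IsProbabilityMeasure μ]
    (hbdd : ∃ c : ℝ, μ (Set.Iio c) = 0) (t : ℝ) (ht : 0 ≤ t) :
    AntitoneOn (fun s => lapZ μ s * lapZ μ (t - s) / lapZ μ t) (Set.Icc 0 (t / 2))
      ∧ MonotoneOn (fun s => lapZ μ s * lapZ μ (t - s) / lapZ μ t) (Set.Icc (t / 2) t)
      ∧ ∀ s ∈ Set.Icc 0 t,
          lapZ μ (t / 2) ^ 2 / lapZ μ t ≤ lapZ μ s * lapZ μ (t - s) / lapZ μ t :=
  stmt_1_general μ hbdd t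
end

section
/- If μ({E}) > 0 and ∫_{(E,∞)} (x - E)^{-1} dμ(x) < ∞, then ∫_{(E,∞)} (x-E)^{-1} dμ(x) equals the limit as t → ∞ of [2 ∫₀ᵗ∫₀ˢ (Z_{t-s} Z_{s-r} Z_r / Z_t) dr ds − (∫₀ᵗ (Z_{t-s} Z_s / Z_t) ds)²] / [2 ∫₀ᵗ (Z_{t-s} Z_s / Z_t) ds]. -/
/-!
Let `a = μ{E}` and `R(τ) = ∫_{(E,∞)} e^{-τ(x-E)} dμ`, so that `Z_τ = e^{-τE} (a + R(τ))` for
`τ ≥ 0`. The exponential factors cancel in every ratio of the statement, which becomes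
`(2 G W - F²) / (2 F W)` with `W = a + R`, `F = W ⋆ W`, `G = W ⋆ F` for the convolution
`(f ⋆ g)(t) = ∫₀ᵗ f(t-s) g(s) ds`. By Fubini `∫₀^∞ R = ∫_{(E,∞)} (x-E)⁻¹ dμ =: I`, and `R` is
decreasing, so `R(t) = o(1/t)` and `F(t) = a² t + O(1)`. Expanding, numerator and denominator are
`2a³ I t + o(t)` and `2a³ t + o(t)`.
-/

open MeasureTheory Real Set Filter intervalIntegral

open Topology

noncomputable def laplaceConv (f g : ℝ → ℝ) (t : ℝ) : ℝ := ∫ s in (0:ℝ)..t, f (t - s) * g s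

theorem Continuous.laplaceConv {f g : ℝ → ℝ} (hf : Continuous f) (hg : Continuous g) :
    Continuous (laplaceConv f g) := by
  unfold _root_.laplaceConv
  exact continuous_parametric_intervalIntegral_of_continuous (by fun_prop) continuous_id

theorem laplaceConv_comm (f g : ℝ → ℝ) : laplaceConv f g = laplaceConv g f := by
  ext t
  have := intervalIntegral.integral_comp_sub_left (fun s => g s * f (t - s)) t (a := 0) (b := t)
  simp only [sub_sub_cancel, sub_self, sub_zero] at this
  simp only [laplaceConv]
  rw [this]
  exact integral_congr fun s _ => mul_comm _ _

theorem laplaceConv_const_add {f g : ℝ → ℝ} (hf : Continuous f) (hg : Continuous g) (a t : ℝ) :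
    laplaceConv (fun s => a + f s) g t = a * (∫ s in (0:ℝ)..t, g s) + laplaceConv f g t := by
  simp only [laplaceConv, add_mul]
  rw [intervalIntegral.integral_add, intervalIntegral.integral_const_mul]
  · exact (continuous_const.mul hg).intervalIntegrable (μ := volume) _ _
  · exact ((hf.comp (continuous_sub_left t)).mul hg).intervalIntegrable (μ := volume) _ _

theorem tendsto_intervalIntegral_div_atTop {h : ℝ → ℝ} {L C : ℝ} (hc : Continuous h)
    (hb : ∀ s, 0 ≤ s → |h s| ≤ C) (hL : Tendsto h atTop (𝓝 L)) :
    Tendsto (fun t => (∫ s in (0:ℝ)..t, h s) / t) atTop (𝓝 L) := by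
  have hscale : ∀ t, 0 < t → (∫ s in (0:ℝ)..t, h s) / t = ∫ u in (0:ℝ)..1, h (t * u) := by
    intro t ht
    rw [intervalIntegral.integral_comp_mul_left _ ht.ne', mul_zero, mul_one, smul_eq_mul,
      inv_mul_eq_div]
  have hlim : Tendsto (fun t => ∫ u in (0:ℝ)..1, h (t * u)) atTop (𝓝 (∫ _ in (0:ℝ)..1, L)) := by
    refine intervalIntegral.tendsto_integral_filter_of_dominated_convergence (fun _ => C)
      (.of_forall fun t => (hc.comp (continuous_const_mul t)).aestronglyMeasurable)
      ?_ intervalIntegrable_const (.of_forall fun u hu => ?_)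
    · filter_upwards [eventually_ge_atTop 0] with t ht
      refine .of_forall fun u hu => hb _ (mul_nonneg ht ?_)
      exact (uIoc_of_le (zero_le_one' ℝ) ▸ hu).1.le
    · exact hL.comp (tendsto_id.atTop_mul_const (uIoc_of_le (zero_le_one' ℝ) ▸ hu).1)
  rw [intervalIntegral.integral_const, sub_zero, one_smul] at hlim
  exact hlim.congr' (eventually_gt_atTop 0 |>.mono fun t ht => (hscale t ht).symm)

theorem tendsto_intervalIntegral_mul_of_tendsto {R : ℝ → ℝ} {k : ℝ → ℝ → ℝ} {L C : ℝ}
    (hR : IntegrableOn R (Ioi 0)) (hk : ∀ t, Continuous (k t))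
    (hkb : ∀ᶠ t in atTop, ∀ s ∈ Icc 0 t, |k t s| ≤ C)
    (hkL : ∀ s, 0 < s → Tendsto (fun t => k t s) atTop (𝓝 L)) :
    Tendsto (fun t => ∫ s in (0:ℝ)..t, k t s * R s) atTop (𝓝 (L * ∫ s in Ioi 0, R s)) := by
  have htrunc : ∀ t, 0 ≤ t →
      ∫ s in (0:ℝ)..t, k t s * R s = ∫ s in Ioi 0, (Iic t).indicator (fun s => k t s * R s) s := by
    intro t ht
    rw [integral_of_le ht, setIntegral_indicator measurableSet_Iic, Ioi_inter_Iic]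
  have hlim : Tendsto (fun t => ∫ s in Ioi 0, (Iic t).indicator (fun s => k t s * R s) s) atTop
      (𝓝 (∫ s in Ioi 0, L * R s)) := by
    refine tendsto_integral_filter_of_dominated_convergence (fun s => C * ‖R s‖)
      (.of_forall fun t => (((hk t).aestronglyMeasurable.mul hR.aestronglyMeasurable).indicator
        measurableSet_Iic)) ?_ (hR.norm.const_mul C) ?_
    · filter_upwards [hkb, eventually_ge_atTop 0] with t hkt ht
      refine (ae_restrict_iff' measurableSet_Ioi).2 (.of_forall fun s hs => ?_)
      by_cases hst : s ∈ Iic t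
      · rw [indicator_of_mem hst, norm_mul, Real.norm_eq_abs]
        exact mul_le_mul_of_nonneg_right (hkt s ⟨hs.le, hst⟩) (norm_nonneg _)
      · rw [indicator_of_notMem hst, norm_zero]
        exact mul_nonneg ((abs_nonneg _).trans (hkt 0 ⟨le_rfl, ht⟩)) (norm_nonneg _)
    · refine (ae_restrict_iff' measurableSet_Ioi).2 (.of_forall fun s hs => ?_)
      refine ((hkL s hs).mul_const (R s)).congr' ?_
      filter_upwards [eventually_ge_atTop s] with t hst
      rw [indicator_of_mem (mem_Iic.2 hst)]
  rw [MeasureTheory.integral_const_mul] at hlim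
  exact hlim.congr' (eventually_ge_atTop 0 |>.mono fun t ht => (htrunc t ht).symm)

structure DecreasingIntegrable (R : ℝ → ℝ) (I : ℝ) : Prop where
  continuous : Continuous R
  antitone : Antitone R
  nonneg : ∀ t, 0 ≤ R t
  tendsto_integral : Tendsto (fun t => ∫ s in (0:ℝ)..t, R s) atTop (𝓝 I)

namespace DecreasingIntegrable

variable {R W : ℝ → ℝ} {I a : ℝ}

theorem intervalIntegrable (hR : DecreasingIntegrable R I) (x y : ℝ) :
    IntervalIntegrable R volume x y :=
  hR.continuous.intervalIntegrable x y

theorem monotone_integral (hR : DecreasingIntegrable R I) :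
    Monotone fun t => ∫ s in (0:ℝ)..t, R s := by
  intro t t' htt'
  dsimp only
  rw [← integral_add_adjacent_intervals (hR.intervalIntegrable 0 t) (hR.intervalIntegrable t t')]
  exact le_add_of_nonneg_right (integral_nonneg htt' fun s _ => hR.nonneg s)

theorem integral_le (hR : DecreasingIntegrable R I) (t : ℝ) : ∫ s in (0:ℝ)..t, R s ≤ I :=
  hR.monotone_integral.ge_of_tendsto hR.tendsto_integral t

theorem integral_nonneg (hR : DecreasingIntegrable R I) {t : ℝ} (ht : 0 ≤ t) :
    0 ≤ ∫ s in (0:ℝ)..t, R s :=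
  intervalIntegral.integral_nonneg ht fun s _ => hR.nonneg s

theorem integrableOn_Ioi (hR : DecreasingIntegrable R I) : IntegrableOn R (Ioi 0) :=
  integrableOn_Ioi_of_intervalIntegral_norm_tendsto I 0
    (fun t => hR.continuous.integrableOn_Ioc) tendsto_id
    (by simpa only [Real.norm_eq_abs, abs_of_nonneg (hR.nonneg _), id] using hR.tendsto_integral)

theorem integral_Ioi (hR : DecreasingIntegrable R I) : ∫ s in Ioi 0, R s = I :=
  tendsto_nhds_unique (intervalIntegral_tendsto_integral_Ioi 0 hR.integrableOn_Ioi tendsto_id)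
    hR.tendsto_integral

/-- `(t/2) R(t) ≤ ∫_{t/2}^t R`, and the right side tends to `I - I`. -/
theorem tendsto_mul_self (hR : DecreasingIntegrable R I) :
    Tendsto (fun t => t * R t) atTop (𝓝 0) := by
  have hhalf : Tendsto (fun t => 2 * ((∫ s in (0:ℝ)..t, R s) - ∫ s in (0:ℝ)..t / 2, R s))
      atTop (𝓝 (2 * (I - I))) :=
    (hR.tendsto_integral.sub
      (hR.tendsto_integral.comp (tendsto_id.atTop_div_const two_pos))).const_mul 2
  rw [sub_self, mul_zero] at hhalf
  refine squeeze_zero' ?_ ?_ hhalf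
  · filter_upwards [eventually_ge_atTop 0] with t ht using mul_nonneg ht (hR.nonneg t)
  · filter_upwards [eventually_ge_atTop 0] with t ht
    rw [integral_interval_sub_left (hR.intervalIntegrable 0 t) (hR.intervalIntegrable 0 (t / 2))]
    have hmono : ∫ _ in t / 2..t, R t ≤ ∫ s in t / 2..t, R s :=
      integral_mono_on (by linarith) intervalIntegrable_const (hR.intervalIntegrable _ _)
        fun s hs => hR.antitone hs.2
    rw [intervalIntegral.integral_const, smul_eq_mul] at hmono
    linarith

theorem tendsto_zero (hR : DecreasingIntegrable R I) : Tendsto R atTop (𝓝 0) := by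
  have := hR.tendsto_mul_self.mul tendsto_inv_atTop_zero
  rw [zero_mul] at this
  refine this.congr' ?_
  filter_upwards [eventually_ne_atTop 0] with t ht
  field_simp

theorem tendsto_laplaceConv_self (hR : DecreasingIntegrable R I) :
    Tendsto (laplaceConv R R) atTop (𝓝 0) := by
  have := tendsto_intervalIntegral_mul_of_tendsto (C := R 0) (L := 0) hR.integrableOn_Ioi
    (k := fun t s => R (t - s)) (fun t => hR.continuous.comp (continuous_sub_left t))
    (.of_forall fun t s hs => by
      rw [abs_of_nonneg (hR.nonneg _)]; exact hR.antitone (by linarith [hs.2]))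
    (fun s _ => hR.tendsto_zero.comp (tendsto_atTop_add_const_right _ (-s) tendsto_id))
  rw [zero_mul] at this
  exact this


theorem laplaceConv_self_nonneg (hR : DecreasingIntegrable R I) {t : ℝ} (ht : 0 ≤ t) :
    0 ≤ laplaceConv R R t :=
  intervalIntegral.integral_nonneg ht fun s _ => mul_nonneg (hR.nonneg _) (hR.nonneg s)

theorem laplaceConv_self_le (hR : DecreasingIntegrable R I) {t : ℝ} (ht : 0 ≤ t) :
    laplaceConv R R t ≤ R 0 * I := by
  calc laplaceConv R R t ≤ ∫ s in (0:ℝ)..t, R 0 * R s :=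
        integral_mono_on ht
          (((hR.continuous.comp (continuous_sub_left t)).mul hR.continuous).intervalIntegrable _ _)
          ((hR.intervalIntegrable 0 t).const_mul _)
          fun s hs => mul_le_mul_of_nonneg_right (hR.antitone (by linarith [hs.2])) (hR.nonneg s)
    _ ≤ R 0 * I := by
        rw [intervalIntegral.integral_const_mul]
        exact mul_le_mul_of_nonneg_left (hR.integral_le t) (hR.nonneg 0)

theorem continuous_laplaceConv_self (hR : DecreasingIntegrable R I) (hW : ∀ t, W t = a + R t) :
    Continuous (laplaceConv W W) := by
  obtain rfl : W = fun t => a + R t := funext hW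
  exact (continuous_const.add hR.continuous).laplaceConv (continuous_const.add hR.continuous)

theorem laplaceConv_self_sub (hR : DecreasingIntegrable R I) (hW : ∀ t, W t = a + R t) (t : ℝ) :
    laplaceConv W W t - a ^ 2 * t = 2 * a * (∫ s in (0:ℝ)..t, R s) + laplaceConv R R t := by
  obtain rfl : W = fun t => a + R t := funext hW
  have hWc : Continuous fun t => a + R t := continuous_const.add hR.continuous
  rw [laplaceConv_const_add hR.continuous hWc, laplaceConv_comm R,
    laplaceConv_const_add hR.continuous hR.continuous,
    intervalIntegral.integral_add intervalIntegrable_const (hR.intervalIntegrable 0 t),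
    intervalIntegral.integral_const, smul_eq_mul]
  ring

theorem abs_laplaceConv_self_sub_le (hR : DecreasingIntegrable R I) (hW : ∀ t, W t = a + R t)
    (ha : 0 ≤ a) {t : ℝ} (ht : 0 ≤ t) :
    |laplaceConv W W t - a ^ 2 * t| ≤ (2 * a + R 0) * I := by
  rw [hR.laplaceConv_self_sub hW, abs_of_nonneg (add_nonneg (mul_nonneg (by positivity)
    (hR.integral_nonneg ht)) (hR.laplaceConv_self_nonneg ht))]
  nlinarith [hR.integral_le t, hR.laplaceConv_self_le ht]

theorem tendsto_laplaceConv_self_sub (hR : DecreasingIntegrable R I) (hW : ∀ t, W t = a + R t) :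
    Tendsto (fun t => laplaceConv W W t - a ^ 2 * t) atTop (𝓝 (2 * a * I)) := by
  simp only [hR.laplaceConv_self_sub hW]
  simpa only [add_zero] using
    (hR.tendsto_integral.const_mul (2 * a)).add hR.tendsto_laplaceConv_self

theorem tendsto_laplaceConv_div (hR : DecreasingIntegrable R I) (hW : ∀ t, W t = a + R t)
    (ha : 0 ≤ a) :
    Tendsto (fun t => laplaceConv (laplaceConv W W) R t / t) atTop (𝓝 (a ^ 2 * I)) := by
  set F := laplaceConv W W
  have hF : Continuous F := hR.continuous_laplaceConv_self hW
  set C := (2 * a + R 0) * I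
  have hbound : ∀ t, 1 ≤ t → ∀ s ∈ Icc 0 t, |F (t - s) / t| ≤ a ^ 2 + C := by
    intro t ht s hs
    have hexcess := abs_le.1 (hR.abs_laplaceConv_self_sub_le hW ha (by linarith [hs.2] : 0 ≤ t - s))
    have hC : 0 ≤ C := (abs_nonneg _).trans (hR.abs_laplaceConv_self_sub_le hW ha le_rfl)
    rw [abs_div, abs_of_pos (by linarith : (0:ℝ) < t), div_le_iff₀ (by linarith)]
    refine abs_le.2 ⟨?_, ?_⟩ <;> nlinarith [hs.1, hs.2, sq_nonneg a]
  have hpoint : ∀ s, Tendsto (fun t => F (t - s) / t) atTop (𝓝 (a ^ 2)) := by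
    intro s
    have hshift := tendsto_atTop_add_const_right _ (-s) tendsto_id
    have hlin : Tendsto (fun t => a ^ 2 * (1 - s * t⁻¹)) atTop (𝓝 (a ^ 2 * (1 - s * 0))) :=
      ((tendsto_inv_atTop_zero.const_mul s).const_sub 1).const_mul _
    have hexcess := ((hR.tendsto_laplaceConv_self_sub hW).comp hshift).div_atTop tendsto_id
    rw [mul_zero, sub_zero, mul_one] at hlin
    have hsum := hlin.add hexcess
    rw [add_zero] at hsum
    refine hsum.congr' ?_
    filter_upwards [eventually_ne_atTop 0] with t ht
    simp only [Function.comp, id, F, ← sub_eq_add_neg]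
    field_simp
    ring
  have := tendsto_intervalIntegral_mul_of_tendsto hR.integrableOn_Ioi
    (k := fun t s => F (t - s) / t)
    (fun t => (hF.comp (continuous_sub_left t)).div_const t)
    (eventually_ge_atTop 1 |>.mono hbound) (fun s _ => hpoint s)
  rw [hR.integral_Ioi] at this
  refine this.congr fun t => ?_
  simp only [laplaceConv, ← intervalIntegral.integral_div, div_mul_eq_mul_div]

theorem laplaceConv_laplaceConv_self (hR : DecreasingIntegrable R I) (hW : ∀ t, W t = a + R t)
    (t : ℝ) :
    laplaceConv W (laplaceConv W W) t = a * (a ^ 2 * t ^ 2 / 2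
      + ∫ s in (0:ℝ)..t, (laplaceConv W W s - a ^ 2 * s)) + laplaceConv (laplaceConv W W) R t := by
  have hFc := hR.continuous_laplaceConv_self hW
  have hsplit : ∫ s in (0:ℝ)..t, laplaceConv W W s
      = ∫ s in (0:ℝ)..t, (a ^ 2 * s + (laplaceConv W W s - a ^ 2 * s)) :=
    integral_congr fun s _ => by ring
  have hlin : IntervalIntegrable (fun s : ℝ => a ^ 2 * s) volume 0 t :=
    (continuous_const.mul continuous_id).intervalIntegrable 0 t
  have hexcess : IntervalIntegrable (fun s => laplaceConv W W s - a ^ 2 * s) volume 0 t :=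
    (hFc.sub (continuous_const.mul continuous_id)).intervalIntegrable 0 t
  obtain rfl : W = fun t => a + R t := funext hW
  rw [laplaceConv_const_add hR.continuous hFc, laplaceConv_comm R, hsplit,
    intervalIntegral.integral_add hlin hexcess, intervalIntegral.integral_const_mul, integral_id]
  ring

/-- With `F = a² t + h` and `G = W ⋆ F = a (a² t²/2 + ∫₀ᵗ h) + F ⋆ R`, one has
`2 G W - F² = 2a² (∫₀ᵗ h - t h) - h² + 2a (F ⋆ R) + 2 R G`; after division by `t` the first
term vanishes in the limit by Cesàro. -/
theorem tendsto_two_mul_laplaceConv_mul_sub_sq_div (hR : DecreasingIntegrable R I) (ha : 0 < a)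
    (hW : ∀ t, W t = a + R t) :
    Tendsto (fun t => (2 * laplaceConv W (laplaceConv W W) t * W t - laplaceConv W W t ^ 2) / t)
      atTop (𝓝 (2 * a ^ 3 * I)) := by
  set h := fun t => laplaceConv W W t - a ^ 2 * t
  have hh : Tendsto h atTop (𝓝 (2 * a * I)) := hR.tendsto_laplaceConv_self_sub hW
  have hH : Tendsto (fun t => (∫ s in (0:ℝ)..t, h s) / t) atTop (𝓝 (2 * a * I)) :=
    tendsto_intervalIntegral_div_atTop
      ((hR.continuous_laplaceConv_self hW).sub (continuous_const.mul continuous_id))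
      (fun s hs => hR.abs_laplaceConv_self_sub_le hW ha.le hs) hh
  have hK := hR.tendsto_laplaceConv_div hW ha.le
  have hGt := (((hH.div_atTop tendsto_id).const_add (a ^ 2 / 2)).const_mul a).add
    (hK.div_atTop tendsto_id)
  have hlim := ((((hH.sub hh).const_mul (2 * a ^ 2)).sub ((hh.pow 2).div_atTop tendsto_id)).add
    (hK.const_mul (2 * a))).add ((hR.tendsto_mul_self.mul hGt).const_mul 2)
  convert hlim.congr' ?_ using 2
  · ring
  filter_upwards [eventually_ne_atTop 0] with t ht
  rw [hR.laplaceConv_laplaceConv_self hW t, hW t,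
    show laplaceConv W W t = a ^ 2 * t + h t by simp only [h]; ring]
  simp only [id]
  field_simp
  ring

theorem tendsto_two_mul_laplaceConv_self_mul_div (hR : DecreasingIntegrable R I)
    (hW : ∀ t, W t = a + R t) :
    Tendsto (fun t => 2 * laplaceConv W W t * W t / t) atTop (𝓝 (2 * a ^ 3)) := by
  have hlim := (((((hR.tendsto_laplaceConv_self_sub hW).div_atTop tendsto_id).const_add
    (a ^ 2)).const_mul 2).mul (hR.tendsto_zero.const_add a))
  convert hlim.congr' ?_ using 2
  · ring
  filter_upwards [eventually_ne_atTop 0] with t ht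
  simp only [id, hW t]
  field_simp
  ring

theorem tendsto_laplaceConv_ratio (hR : DecreasingIntegrable R I) (ha : 0 < a)
    (hW : ∀ t, W t = a + R t) :
    Tendsto (fun t => (2 * (laplaceConv W (laplaceConv W W) t / W t)
        - (laplaceConv W W t / W t) ^ 2) / (2 * (laplaceConv W W t / W t))) atTop (𝓝 I) := by
  have hratio := (hR.tendsto_two_mul_laplaceConv_mul_sub_sq_div ha hW).div
    (hR.tendsto_two_mul_laplaceConv_self_mul_div hW) (by positivity)
  rw [mul_div_cancel_left₀ I (by positivity)] at hratio
  refine hratio.congr' ?_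
  filter_upwards [eventually_ne_atTop 0] with t ht
  have hW0 : W t ≠ 0 := by rw [hW t]; linarith [hR.nonneg t]
  simp only [Pi.div_apply]
  rw [div_div_div_cancel_right₀ ht]
  field_simp

end DecreasingIntegrable

theorem integral_exp_neg_mul_interval {c : ℝ} (hc : c ≠ 0) (t : ℝ) :
    ∫ s in (0:ℝ)..t, exp (-(s * c)) = (1 - exp (-(t * c))) / c := by
  have := intervalIntegral.integral_comp_mul_left (fun x => exp x) (c := -c) (a := 0) (b := t)
    (neg_ne_zero.2 hc)
  simp only [integral_exp, mul_zero, exp_zero, smul_eq_mul] at this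
  rw [show (fun s => exp (-(s * c))) = fun s => exp (-c * s) by ext; ring_nf, this]
  field_simp
  ring_nf

/-- The time is clamped at `0` so that the function is bounded and antitone on all of `ℝ`. -/
noncomputable def tailLaplace (μ : Measure ℝ) (E t : ℝ) : ℝ :=
  ∫ x in Ioi E, exp (-(max t 0 * (x - E))) ∂μ

/-- For `τ ≥ 0` and `μ` carried by `[E, ∞)` this is `e^{τE} Z_τ`. -/
noncomputable def shiftedLapZ (μ : Measure ℝ) (E τ : ℝ) : ℝ := (μ {E}).toReal + tailLaplace μ E τ

section tailLaplace

variable {μ : Measure ℝ} {E : ℝ}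

theorem exp_neg_mul_sub_le_one {t x : ℝ} (ht : 0 ≤ t) (hx : x ∈ Ioi E) :
    exp (-(t * (x - E))) ≤ 1 :=
  exp_le_one_iff.2 (neg_nonpos.2 (mul_nonneg ht (sub_nonneg.2 (le_of_lt hx))))

theorem tailLaplace_nonneg (t : ℝ) : 0 ≤ tailLaplace μ E t :=
  setIntegral_nonneg measurableSet_Ioi fun _ _ => (exp_pos _).le

variable [IsFiniteMeasure μ]

theorem integrableOn_exp_neg_mul_sub {t : ℝ} (ht : 0 ≤ t) :
    IntegrableOn (fun x => exp (-(t * (x - E)))) (Ioi E) μ :=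
  IntegrableOn.of_bound (measure_lt_top _ _) (by fun_prop) 1
    ((ae_restrict_iff' measurableSet_Ioi).2 (.of_forall fun x hx => by
      rw [Real.norm_of_nonneg (exp_pos _).le]; exact exp_neg_mul_sub_le_one ht hx))

theorem antitone_tailLaplace : Antitone (tailLaplace μ E) := fun _ _ htt' =>
  setIntegral_mono_on (integrableOn_exp_neg_mul_sub (le_max_right _ _))
    (integrableOn_exp_neg_mul_sub (le_max_right _ _)) measurableSet_Ioi fun _ hx =>
      exp_le_exp.2 (neg_le_neg (mul_le_mul_of_nonneg_right (max_le_max htt' le_rfl)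
        (sub_nonneg.2 (le_of_lt hx))))

theorem continuous_tailLaplace : Continuous (tailLaplace μ E) :=
  continuous_of_dominated (bound := fun _ => 1) (fun t => by fun_prop)
    (fun t => (ae_restrict_iff' measurableSet_Ioi).2 (.of_forall fun x hx => by
      rw [Real.norm_of_nonneg (exp_pos _).le]; exact exp_neg_mul_sub_le_one (le_max_right _ _) hx))
    (integrable_const 1) (.of_forall fun x => by fun_prop)

theorem integral_tailLaplace {t : ℝ} (ht : 0 ≤ t) :
    ∫ s in (0:ℝ)..t, tailLaplace μ E s = ∫ x in Ioi E, (1 - exp (-(t * (x - E)))) / (x - E) ∂μ := by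
  have hprod : Integrable (Function.uncurry fun s x => exp (-(max s 0 * (x - E))))
      ((volume.restrict (uIoc 0 t)).prod (μ.restrict (Ioi E))) := by
    have : IsFiniteMeasure (volume.restrict (uIoc (0:ℝ) t)) :=
      isFiniteMeasure_restrict.2 (by rw [uIoc]; exact measure_Ioc_lt_top.ne)
    refine Integrable.of_bound (by fun_prop) 1 ?_
    rw [Measure.prod_restrict]
    refine (ae_restrict_iff' (measurableSet_uIoc.prod measurableSet_Ioi)).2 (.of_forall ?_)
    rintro ⟨s, x⟩ ⟨-, hx⟩
    rw [Function.uncurry_apply_pair, Real.norm_of_nonneg (exp_pos _).le]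
    exact exp_neg_mul_sub_le_one (le_max_right _ _) hx
  simp only [tailLaplace]
  rw [intervalIntegral_integral_swap hprod]
  refine setIntegral_congr_fun measurableSet_Ioi fun x hx => ?_
  rw [← integral_exp_neg_mul_interval (sub_pos.2 hx).ne']
  exact integral_congr fun s hs => by
    rw [uIcc_of_le ht] at hs
    rw [max_eq_left hs.1]

theorem tendsto_integral_tailLaplace (hint : IntegrableOn (fun x => (x - E)⁻¹) (Ioi E) μ) :
    Tendsto (fun t => ∫ s in (0:ℝ)..t, tailLaplace μ E s) atTop
      (𝓝 (∫ x in Ioi E, (x - E)⁻¹ ∂μ)) := by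
  have hlim : Tendsto (fun t => ∫ x in Ioi E, (1 - exp (-(t * (x - E)))) / (x - E) ∂μ) atTop
      (𝓝 (∫ x in Ioi E, (x - E)⁻¹ ∂μ)) := by
    refine tendsto_integral_filter_of_dominated_convergence _
      (.of_forall fun t => (by fun_prop : Measurable fun x : ℝ =>
        (1 - exp (-(t * (x - E)))) / (x - E)).aestronglyMeasurable) ?_
      hint ((ae_restrict_iff' measurableSet_Ioi).2 (.of_forall fun x hx => ?_))
    · filter_upwards [eventually_ge_atTop 0] with t ht
      refine (ae_restrict_iff' measurableSet_Ioi).2 (.of_forall fun x hx => ?_)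
      have hxE : 0 < x - E := sub_pos.2 hx
      rw [Real.norm_of_nonneg (div_nonneg (sub_nonneg.2 (exp_neg_mul_sub_le_one ht hx)) hxE.le),
        div_eq_mul_inv]
      exact mul_le_of_le_one_left (inv_nonneg.2 hxE.le) (by linarith [exp_pos (-(t * (x - E)))])
    · have hexp := tendsto_exp_neg_atTop_nhds_zero.comp
        (tendsto_id.atTop_mul_const (sub_pos.2 hx))
      simpa only [Function.comp, id, sub_zero, one_div] using (hexp.const_sub 1).div_const (x - E)
  exact hlim.congr' (eventually_ge_atTop 0 |>.mono fun t ht => (integral_tailLaplace ht).symm)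

theorem decreasingIntegrable_tailLaplace
    (hint : IntegrableOn (fun x => (x - E)⁻¹) (Ioi E) μ) :
    DecreasingIntegrable (tailLaplace μ E) (∫ x in Ioi E, (x - E)⁻¹ ∂μ) :=
  ⟨continuous_tailLaplace, antitone_tailLaplace, tailLaplace_nonneg,
    tendsto_integral_tailLaplace hint⟩

theorem lapZ_eq_exp_mul_shiftedLapZ (hE0 : μ (Iio E) = 0) {τ : ℝ} (hτ : 0 ≤ τ) :
    lapZ μ τ = exp (-(τ * E)) * shiftedLapZ μ E τ := by
  have hcarrier : μ.restrict (Ici E) = μ := Measure.restrict_eq_self_of_ae_mem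
    ((measure_eq_zero_iff_ae_notMem.1 hE0).mono fun _ hx => mem_Ici.2 (not_lt.1 hx))
  have hsplit : ∫ x, exp (-(τ * (x - E))) ∂μ = (μ {E}).toReal + tailLaplace μ E τ := by
    conv_lhs => rw [← hcarrier]
    rw [← Ioi_insert, ← singleton_union, setIntegral_union (by simp) measurableSet_Ioi
      (integrableOn_singleton ..) (integrableOn_exp_neg_mul_sub hτ), integral_singleton,
      tailLaplace, max_eq_left hτ]
    simp [measureReal_def]
  rw [shiftedLapZ, ← hsplit, lapZ, ← MeasureTheory.integral_const_mul]
  congr 1 with x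
  rw [← exp_add]
  ring_nf

end tailLaplace

section lapZ

variable {μ : Measure ℝ} [IsFiniteMeasure μ] {E : ℝ}

theorem lapZ_mul_lapZ_div_lapZ (hE0 : μ (Iio E) = 0) {s t : ℝ} (hs : 0 ≤ s) (hst : s ≤ t) :
    lapZ μ (t - s) * lapZ μ s / lapZ μ t
      = shiftedLapZ μ E (t - s) * shiftedLapZ μ E s / shiftedLapZ μ E t := by
  rw [lapZ_eq_exp_mul_shiftedLapZ hE0 (sub_nonneg.2 hst), lapZ_eq_exp_mul_shiftedLapZ hE0 hs,
    lapZ_eq_exp_mul_shiftedLapZ hE0 (hs.trans hst)]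
  have hexp : exp (-((t - s) * E)) * exp (-(s * E)) = exp (-(t * E)) := by
    rw [← exp_add]; ring_nf
  calc _ = (exp (-((t - s) * E)) * exp (-(s * E)))
        * (shiftedLapZ μ E (t - s) * shiftedLapZ μ E s) / (exp (-(t * E)) * shiftedLapZ μ E t) := by
        ring
    _ = _ := by rw [hexp, mul_div_mul_left _ _ (exp_ne_zero _)]

theorem lapZ_mul_lapZ_mul_lapZ_div_lapZ (hE0 : μ (Iio E) = 0) {r s t : ℝ} (hr : 0 ≤ r)
    (hrs : r ≤ s) (hst : s ≤ t) :
    lapZ μ (t - s) * lapZ μ (s - r) * lapZ μ r / lapZ μ t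
      = shiftedLapZ μ E (t - s) / shiftedLapZ μ E t
        * (shiftedLapZ μ E (s - r) * shiftedLapZ μ E r) := by
  rw [lapZ_eq_exp_mul_shiftedLapZ hE0 (sub_nonneg.2 hst),
    lapZ_eq_exp_mul_shiftedLapZ hE0 (sub_nonneg.2 hrs), lapZ_eq_exp_mul_shiftedLapZ hE0 hr,
    lapZ_eq_exp_mul_shiftedLapZ hE0 (hr.trans (hrs.trans hst))]
  have hexp : exp (-((t - s) * E)) * exp (-((s - r) * E)) * exp (-(r * E)) = exp (-(t * E)) := by
    simp only [← exp_add]; ring_nf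
  calc _ = (exp (-((t - s) * E)) * exp (-((s - r) * E)) * exp (-(r * E)))
        * (shiftedLapZ μ E (t - s) * (shiftedLapZ μ E (s - r) * shiftedLapZ μ E r))
        / (exp (-(t * E)) * shiftedLapZ μ E t) := by
        ring
    _ = _ := by rw [hexp, mul_div_mul_left _ _ (exp_ne_zero _)]; ring

theorem intervalIntegral_lapZ_ratio (hE0 : μ (Iio E) = 0) {t : ℝ} (ht : 0 ≤ t) :
    ∫ s in (0:ℝ)..t, lapZ μ (t - s) * lapZ μ s / lapZ μ t
      = laplaceConv (shiftedLapZ μ E) (shiftedLapZ μ E) t / shiftedLapZ μ E t := by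
  rw [laplaceConv, ← intervalIntegral.integral_div]
  refine integral_congr fun s hs => ?_
  rw [uIcc_of_le ht] at hs
  exact lapZ_mul_lapZ_div_lapZ hE0 hs.1 hs.2

theorem intervalIntegral_intervalIntegral_lapZ_ratio (hE0 : μ (Iio E) = 0) {t : ℝ} (ht : 0 ≤ t) :
    ∫ s in (0:ℝ)..t, ∫ r in (0:ℝ)..s, lapZ μ (t - s) * lapZ μ (s - r) * lapZ μ r / lapZ μ t
      = laplaceConv (shiftedLapZ μ E) (laplaceConv (shiftedLapZ μ E) (shiftedLapZ μ E)) t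
        / shiftedLapZ μ E t := by
  rw [laplaceConv, ← intervalIntegral.integral_div]
  refine integral_congr fun s hs => ?_
  rw [uIcc_of_le ht] at hs
  simp only [laplaceConv]
  rw [mul_div_right_comm, ← intervalIntegral.integral_const_mul]
  refine integral_congr fun r hr => ?_
  rw [uIcc_of_le hs.1] at hr
  exact lapZ_mul_lapZ_mul_lapZ_div_lapZ hE0 hr.1 hr.2 hs.2

end lapZ

theorem stmt_6_general (μ : Measure ℝ) [IsProbabilityMeasure μ] (E : ℝ)
    (hE0 : μ (Set.Iio E) = 0)
    (hatom : 0 < μ {E})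
    (hint : IntegrableOn (fun x => (x - E)⁻¹) (Set.Ioi E) μ) :
    Tendsto (fun t =>
        (2 * (∫ s in (0:ℝ)..t, ∫ r in (0:ℝ)..s,
            lapZ μ (t - s) * lapZ μ (s - r) * lapZ μ r / lapZ μ t)
          - (∫ s in (0:ℝ)..t, lapZ μ (t - s) * lapZ μ s / lapZ μ t) ^ 2)
        / (2 * ∫ s in (0:ℝ)..t, lapZ μ (t - s) * lapZ μ s / lapZ μ t))
      atTop (nhds (∫ x in Set.Ioi E, (x - E)⁻¹ ∂μ)) := by
  have ha : 0 < (μ {E}).toReal := ENNReal.toReal_pos hatom.ne' (measure_ne_top μ _)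
  refine ((decreasingIntegrable_tailLaplace hint).tendsto_laplaceConv_ratio ha
    (W := shiftedLapZ μ E) fun _ => rfl).congr' ?_
  filter_upwards [eventually_ge_atTop 0] with t ht
  rw [intervalIntegral_lapZ_ratio hE0 ht, intervalIntegral_intervalIntegral_lapZ_ratio hE0 ht]

/-- If `μ({E}) > 0` and `∫_{(E,∞)} (x-E)⁻¹ dμ < ∞`, then
`∫_{(E,∞)} (x-E)⁻¹ dμ` equals the limit as `t → ∞` of
`[2 ∫₀ᵗ∫₀ˢ Z_{t-s}Z_{s-r}Z_r/Z_t dr ds − (∫₀ᵗ Z_{t-s}Z_s/Z_t ds)²] / [2 ∫₀ᵗ Z_{t-s}Z_s/Z_t ds]`. -/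
theorem stmt_6 (μ : Measure ℝ) [IsProbabilityMeasure μ] (E : ℝ)
    (hE0 : μ (Set.Iio E) = 0) (hE1 : ∀ ε : ℝ, 0 < ε → 0 < μ (Set.Ico E (E + ε)))
    (hatom : 0 < μ {E})
    (hint : IntegrableOn (fun x => (x - E)⁻¹) (Set.Ioi E) μ) :
    Tendsto (fun t =>
        (2 * (∫ s in (0:ℝ)..t, ∫ r in (0:ℝ)..s,
            lapZ μ (t - s) * lapZ μ (s - r) * lapZ μ r / lapZ μ t)
          - (∫ s in (0:ℝ)..t, lapZ μ (t - s) * lapZ μ s / lapZ μ t) ^ 2)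
        / (2 * ∫ s in (0:ℝ)..t, lapZ μ (t - s) * lapZ μ s / lapZ μ t))
      atTop (nhds (∫ x in Set.Ioi E, (x - E)⁻¹ ∂μ)) :=
  stmt_6_general μ E hE0 hatom hint
end

section
/- With f_t(x,y) := (e^{-tx} − e^{-ty})/(t(y−x)) for x ≠ y and f_t(x,x) := e^{-tx}, one has the Fubini identity (1/t) ∫₀ᵗ Z_s Z_{t-s} ds = ∫∫ f_t(x,y) dμ(x) dμ(y), and the bound f_t(x,y) ≤ e^{-t·min(x,y)} for all x, y ≥ 0 and t > 0. -/
/-!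
Writing `Z_s Z_{t-s}` as the double integral of `e^{-sx-(t-s)y}` and swapping the order of
integration (legitimate because the integrand is bounded by `1` when `x, y ≥ 0` and `0 ≤ s ≤ t`),
the identity reduces to `∫₀ᵗ e^{-sx-(t-s)y} ds = t f_t(x,y)`, an elementary integral. The same
formula exhibits `f_t(x,y)` as the average over `s ∈ [0,t]` of `e^{-sx-(t-s)y} ≤ e^{-t min(x,y)}`,
which gives the bound.
-/

open MeasureTheory Real Set intervalIntegral

/-- The kernel `f_t(x,y)`. -/
noncomputable def fker (t x y : ℝ) : ℝ :=
  if x = y then Real.exp (-t * x)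
  else (Real.exp (-t * x) - Real.exp (-t * y)) / (t * (y - x))

theorem integral_exp_sub_eq_mul_fker (t x y : ℝ) :
    ∫ s in (0:ℝ)..t, exp (-s * x - (t - s) * y) = t * fker t x y := by
  by_cases hxy : x = y
  · subst hxy
    have hconst : ∀ s, exp (-s * x - (t - s) * x) = exp (-t * x) := fun s => by ring_nf
    rw [fker, if_pos rfl]
    simp only [hconst, intervalIntegral.integral_const, smul_eq_mul, sub_zero]
  · have hyx : y - x ≠ 0 := sub_ne_zero.mpr (Ne.symm hxy)
    have hfactor : ∀ s, exp (-s * x - (t - s) * y) = exp (-t * y) * exp (s * (y - x)) := by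
      intro s; rw [← exp_add]; ring_nf
    have hends : exp (-t * y) * exp (t * (y - x)) = exp (-t * x) := by
      rw [← exp_add]; ring_nf
    simp only [hfactor, intervalIntegral.integral_const_mul, integral_comp_mul_right exp hyx,
      integral_exp, zero_mul, exp_zero, smul_eq_mul, fker, if_neg hxy]
    rcases eq_or_ne t 0 with rfl | ht
    · simp
    · rw [← hends]
      field_simp

theorem fker_le_exp_neg_mul_min {t : ℝ} (ht : 0 < t) (x y : ℝ) :
    fker t x y ≤ exp (-t * min x y) := by
  have hmono : ∫ s in (0:ℝ)..t, exp (-s * x - (t - s) * y)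
      ≤ ∫ _ in (0:ℝ)..t, exp (-t * min x y) := by
    refine integral_mono_on ht.le (by apply Continuous.intervalIntegrable; fun_prop)
      intervalIntegrable_const fun s hs => exp_le_exp.mpr ?_
    linarith [mul_nonneg hs.1 (sub_nonneg.mpr (min_le_left x y)),
      mul_nonneg (sub_nonneg.mpr hs.2) (sub_nonneg.mpr (min_le_right x y))]
  rw [integral_exp_sub_eq_mul_fker, intervalIntegral.integral_const, smul_eq_mul, sub_zero]
    at hmono
  exact le_of_mul_le_mul_left hmono ht

theorem lapZ_mul_lapZ (μ : Measure ℝ) [SFinite μ] (s u : ℝ) :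
    lapZ μ s * lapZ μ u = ∫ p, exp (-s * p.1 - u * p.2) ∂μ.prod μ := by
  simp_rw [sub_eq_add_neg, exp_add, ← neg_mul]
  exact (integral_prod_mul (fun x => exp (-s * x)) (fun y => exp (-u * y))).symm

section

variable {μ : Measure ℝ} [IsFiniteMeasure μ]

theorem integrable_exp_sub_restrict_Ioc_prod (hμ : ∀ᵐ x ∂μ, 0 ≤ x) (t : ℝ) :
    Integrable (fun q : ℝ × ℝ × ℝ => exp (-q.1 * q.2.1 - (t - q.1) * q.2.2))
      ((volume.restrict (Ioc 0 t)).prod (μ.prod μ)) := by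
  have hs : ∀ᵐ q ∂(volume.restrict (Ioc 0 t)).prod (μ.prod μ), q.1 ∈ Ioc 0 t :=
    Measure.quasiMeasurePreserving_fst.tendsto_ae.eventually (ae_restrict_mem measurableSet_Ioc)
  have hxy : ∀ᵐ q ∂(volume.restrict (Ioc 0 t)).prod (μ.prod μ), 0 ≤ q.2.1 ∧ 0 ≤ q.2.2 :=
    Measure.quasiMeasurePreserving_snd.tendsto_ae.eventually
      ((Measure.quasiMeasurePreserving_fst.tendsto_ae.eventually hμ).and
        (Measure.quasiMeasurePreserving_snd.tendsto_ae.eventually hμ))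
  refine Integrable.mono' (integrable_const 1) (by fun_prop) ?_
  filter_upwards [hs, hxy] with q ⟨hs0, hst⟩ ⟨hx, hy⟩
  rw [norm_of_nonneg (exp_pos _).le, exp_le_one_iff]
  linarith [mul_nonneg hs0.le hx, mul_nonneg (sub_nonneg.mpr hst) hy]

theorem integral_lapZ_mul_lapZ_sub (hμ : ∀ᵐ x ∂μ, 0 ≤ x) {t : ℝ} (ht : 0 ≤ t) :
    ∫ s in (0:ℝ)..t, lapZ μ s * lapZ μ (t - s) = ∫ p, t * fker t p.1 p.2 ∂μ.prod μ := by
  calc ∫ s in (0:ℝ)..t, lapZ μ s * lapZ μ (t - s)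
      = ∫ s in Ioc 0 t, (∫ p, exp (-s * p.1 - (t - s) * p.2) ∂μ.prod μ) := by
        simp_rw [integral_of_le ht, lapZ_mul_lapZ]
    _ = ∫ p, (∫ s in Ioc 0 t, exp (-s * p.1 - (t - s) * p.2)) ∂μ.prod μ :=
        integral_integral_swap (integrable_exp_sub_restrict_Ioc_prod hμ t)
    _ = ∫ p, t * fker t p.1 p.2 ∂μ.prod μ := by
        simp_rw [← integral_of_le ht, integral_exp_sub_eq_mul_fker]

theorem integrable_fker_prod (hμ : ∀ᵐ x ∂μ, 0 ≤ x) {t : ℝ} (ht : 0 < t) :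
    Integrable (fun p : ℝ × ℝ => fker t p.1 p.2) (μ.prod μ) := by
  have h := (integrable_exp_sub_restrict_Ioc_prod hμ t).integral_prod_right
  simp_rw [← integral_of_le ht.le, integral_exp_sub_eq_mul_fker] at h
  simpa [ht.ne'] using h.const_mul t⁻¹

end

/-- The Fubini identity `(1/t) ∫₀ᵗ Z_s Z_{t-s} ds = ∫∫ f_t(x,y) dμ(x)dμ(y)`
and the bound `f_t(x,y) ≤ e^{-t·min(x,y)}` for `x, y ≥ 0`, `t > 0`, for a probability
measure `μ` on `[0,∞)`. -/
theorem stmt_8 (μ : Measure ℝ) [IsProbabilityMeasure μ] (hsupp : μ (Set.Iio 0) = 0) :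
    ∀ t : ℝ, 0 < t →
      ((1 / t) * ∫ s in (0:ℝ)..t, lapZ μ s * lapZ μ (t - s)
          = ∫ x, ∫ y, fker t x y ∂μ ∂μ)
        ∧ ∀ x y : ℝ, 0 ≤ x → 0 ≤ y → fker t x y ≤ Real.exp (-t * min x y) := by
  intro t ht
  refine ⟨?_, fun x y _ _ => fker_le_exp_neg_mul_min ht x y⟩
  have hμ : ∀ᵐ x ∂μ, 0 ≤ x := ae_iff.2 (by simpa only [not_le, Iio_def] using hsupp)
  rw [integral_lapZ_mul_lapZ_sub hμ ht.le, MeasureTheory.integral_const_mul,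
    ← integral_prod _ (integrable_fker_prod hμ ht)]
  field_simp
end

section
/- Let S be a self-adjoint operator on a complex Hilbert space 𝔥 and ξ ∈ 𝔥. Then there exists a complex conjugation C on 𝔥 (an anti-unitary involution) such that Cξ = ξ and CS = SC. -/
/-!
Call a real subspace `V` of `𝔥` inner-real if `⟪v, w⟫` is real for all `v, w ∈ V`. By Zorn's lemma
there is a maximal `S`-invariant inner-real subspace `V` containing `ξ`; it exists because the real
span of `ξ, Sξ, S²ξ, …` is inner-real (as `⟪Sᵐξ, Sⁿξ⟫ = ⟪ξ, Sᵐ⁺ⁿξ⟫` and `S` is symmetric).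
Maximality forces `V` to be closed, and every `x` complex-orthogonal to `V` to vanish, since
otherwise the cyclic subspace of `x` could be added to `V`. Then the real orthogonal complement of
`V` is exactly `iV`, so `𝔥 = V ⊕ iV`, and the reflection `v + iw ↦ v - iw` in `V` is the
required conjugation.
-/

open Complex Set Submodule
open scoped InnerProductSpace ComplexConjugate

section Reflection

variable {𝕜 E : Type*} [RCLike 𝕜] [NormedAddCommGroup E] [InnerProductSpace 𝕜 E]
  {K : Submodule 𝕜 E} [K.HasOrthogonalProjection]

theorem Submodule.reflection_add_of_mem_of_mem_orthogonal {v w : E} (hv : v ∈ K) (hw : w ∈ Kᗮ) :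
    K.reflection (v + w) = v - w := by
  rw [map_add, reflection_mem_subspace_eq_self hv,
    reflection_mem_subspace_orthogonalComplement_eq_neg hw, sub_eq_add_neg]

variable {F : Type*} [FunLike F E E] [AddMonoidHomClass F E E] {T : F}

theorem Submodule.reflection_map_of_mapsTo (hK : MapsTo T K K) (hKo : MapsTo T Kᗮ Kᗮ) (x : E) :
    K.reflection (T x) = T (K.reflection x) := by
  obtain ⟨v, hv, w, hw, rfl⟩ := K.exists_add_mem_mem_orthogonal x
  rw [map_add, reflection_add_of_mem_of_mem_orthogonal (hK hv) (hKo hw),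
    reflection_add_of_mem_of_mem_orthogonal hv hw, map_sub]

theorem Submodule.reflection_map_of_mapsTo_orthogonal (hK : MapsTo T K Kᗮ) (hKo : MapsTo T Kᗮ K)
    (x : E) : K.reflection (T x) = -T (K.reflection x) := by
  obtain ⟨v, hv, w, hw, rfl⟩ := K.exists_add_mem_mem_orthogonal x
  rw [map_add, add_comm, reflection_add_of_mem_of_mem_orthogonal (hKo hw) (hK hv),
    reflection_add_of_mem_of_mem_orthogonal hv hw, map_sub, neg_sub]

end Reflection

section Invariance

variable {R M : Type*} [Semiring R] [AddCommMonoid M] [Module R M]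

theorem Submodule.mapsTo_sup {F : Type*} [FunLike F M M] [AddMonoidHomClass F M M] {T : F}
    {V W : Submodule R M} (hV : MapsTo T V V) (hW : MapsTo T W W) :
    MapsTo T ↑(V ⊔ W) ↑(V ⊔ W) := by
  rintro _ hx
  obtain ⟨v, hv, w, hw, rfl⟩ := mem_sup.mp hx
  rw [map_add]
  exact add_mem_sup (hV hv) (hW hw)

theorem Submodule.mapsTo_sSup_of_directedOn {T : M → M} {c : Set (Submodule R M)}
    (hne : c.Nonempty) (hc : DirectedOn (· ≤ ·) c) (h : ∀ V ∈ c, MapsTo T V V) :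
    MapsTo T ↑(sSup c) ↑(sSup c) := by
  intro x hx
  obtain ⟨V, hVc, hxV⟩ := (mem_sSup_of_directed hne hc).mp hx
  exact le_sSup hVc (h V hVc hxV)

end Invariance

theorem LinearMap.IsSymmetric.inner_iterate_left {𝕜 E : Type*} [RCLike 𝕜] [NormedAddCommGroup E]
    [InnerProductSpace 𝕜 E] {T : E →ₗ[𝕜] E} (hT : T.IsSymmetric) (n : ℕ) (x y : E) :
    ⟪T^[n] x, y⟫_𝕜 = ⟪x, T^[n] y⟫_𝕜 := by
  simpa [Module.End.pow_apply] using hT.pow n x y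

theorem Complex.smul_eq_re_smul_add_im_smul_I_smul {M : Type*} [AddCommGroup M] [Module ℂ M]
    (c : ℂ) (x : M) : c • x = c.re • x + c.im • (I • x) := by
  rw [← Complex.coe_smul, ← Complex.coe_smul, smul_smul, ← add_smul, re_add_im]

theorem map_smul_of_map_I_smul {E E' F : Type*} [AddCommGroup E] [Module ℂ E] [AddCommGroup E']
    [Module ℂ E'] [FunLike F E E'] [LinearMapClass F ℝ E E'] {C : F}
    (hC : ∀ x, C (I • x) = -(I • C x)) (c : ℂ) (x : E) : C (c • x) = conj c • C x := by
  rw [smul_eq_re_smul_add_im_smul_I_smul c, smul_eq_re_smul_add_im_smul_I_smul (conj c), map_add,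
    map_smul, map_smul, hC, conj_re, conj_im, smul_neg, neg_smul]

section InnerReal

variable {E : Type*} [NormedAddCommGroup E] [InnerProductSpace ℂ E]

def Submodule.IsInnerReal (V : Submodule ℝ E) : Prop :=
  ∀ v ∈ V, ∀ w ∈ V, (⟪v, w⟫_ℂ).im = 0

/-- For complete `V` this means `E = V ⊕ I • V`, an orthogonal sum over `ℝ`. -/
structure Submodule.IsRealForm (V : Submodule ℝ E) : Prop where
  isInnerReal : V.IsInnerReal
  eq_zero_of_forall_inner : ∀ x, (∀ v ∈ V, ⟪v, x⟫_ℂ = 0) → x = 0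

namespace Submodule

variable {V W : Submodule ℝ E}

theorem isInnerReal_span {s : Set E} (h : ∀ a ∈ s, ∀ b ∈ s, (⟪a, b⟫_ℂ).im = 0) :
    (span ℝ s).IsInnerReal := by
  intro v hv w hw
  induction hv, hw using span_induction₂ with
  | mem_mem a b ha hb => exact h a ha b hb
  | zero_left => simp
  | zero_right => simp
  | add_left _ _ _ _ _ _ h₁ h₂ => rw [inner_add_left, add_im, h₁, h₂, add_zero]
  | add_right _ _ _ _ _ _ h₁ h₂ => rw [inner_add_right, add_im, h₁, h₂, add_zero]
  | smul_left r _ _ _ _ h => simp [← Complex.coe_smul, h]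
  | smul_right r _ _ _ _ h => simp [← Complex.coe_smul, h]

theorem IsInnerReal.sup (hV : V.IsInnerReal) (hW : W.IsInnerReal)
    (hVW : ∀ v ∈ V, ∀ w ∈ W, ⟪v, w⟫_ℂ = 0) : (V ⊔ W).IsInnerReal := by
  rintro _ hx _ hy
  obtain ⟨v, hv, w, hw, rfl⟩ := mem_sup.mp hx
  obtain ⟨v', hv', w', hw', rfl⟩ := mem_sup.mp hy
  have hwv' : ⟪w, v'⟫_ℂ = 0 := by rw [← inner_conj_symm, hVW v' hv' w hw, map_zero]
  simp [hVW v hv w' hw', hwv', hV v hv v' hv', hW w hw w' hw']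

theorem isInnerReal_sSup_of_directedOn {c : Set (Submodule ℝ E)} (hne : c.Nonempty)
    (hc : DirectedOn (· ≤ ·) c) (h : ∀ V ∈ c, V.IsInnerReal) : (sSup c).IsInnerReal := by
  intro v hv w hw
  obtain ⟨V₁, hV₁, hv₁⟩ := (mem_sSup_of_directed hne hc).mp hv
  obtain ⟨V₂, hV₂, hw₂⟩ := (mem_sSup_of_directed hne hc).mp hw
  obtain ⟨V, hV, h₁, h₂⟩ := hc V₁ hV₁ V₂ hV₂
  exact h V hV v (h₁ hv₁) w (h₂ hw₂)

theorem IsInnerReal.topologicalClosure (hV : V.IsInnerReal) :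
    V.topologicalClosure.IsInnerReal := by
  intro v hv w hw
  simpa using map_mem_closure₂ (f := fun v w : E => (⟪v, w⟫_ℂ).im) (u := {0})
    (continuous_im.comp continuous_inner) hv hw hV

end Submodule

variable {S : E →L[ℂ] E} {V : Submodule ℝ E}

noncomputable def cyclicSpan (S : E →L[ℂ] E) (x : E) : Submodule ℝ E :=
  span ℝ (range fun n : ℕ => S^[n] x)

theorem self_mem_cyclicSpan (S : E →L[ℂ] E) (x : E) : x ∈ cyclicSpan S x :=
  subset_span ⟨0, rfl⟩

theorem mapsTo_cyclicSpan (S : E →L[ℂ] E) (x : E) :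
    MapsTo S (cyclicSpan S x) (cyclicSpan S x) := by
  intro y hy
  induction hy using span_induction with
  | mem _ hy =>
    obtain ⟨n, rfl⟩ := hy
    exact subset_span ⟨n + 1, Function.iterate_succ_apply' S n x⟩
  | zero => simp
  | add _ _ _ _ h₁ h₂ => rw [map_add]; exact add_mem h₁ h₂
  | smul r _ _ h => rw [ContinuousLinearMap.map_smul_of_tower]; exact smul_mem _ r h

theorem isInnerReal_cyclicSpan (hS : (S : E →ₗ[ℂ] E).IsSymmetric) (x : E) :
    (cyclicSpan S x).IsInnerReal := by
  refine isInnerReal_span ?_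
  rintro _ ⟨m, rfl⟩ _ ⟨n, rfl⟩
  have h := (hS.pow (m + n)).im_inner_self_apply x
  rw [Module.End.pow_apply, Function.iterate_add_apply, ← hS.inner_iterate_left] at h
  exact h

theorem inner_cyclicSpan_eq_zero (hS : (S : E →ₗ[ℂ] E).IsSymmetric) (hSV : MapsTo S V V)
    {x : E} (hx : ∀ v ∈ V, ⟪v, x⟫_ℂ = 0) : ∀ v ∈ V, ∀ y ∈ cyclicSpan S x, ⟪v, y⟫_ℂ = 0 := by
  intro v hv y hy
  have hle : cyclicSpan S x ≤ (ℂ ∙ v)ᗮ.restrictScalars ℝ := by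
    refine span_le.mpr ?_
    rintro _ ⟨n, rfl⟩
    rw [SetLike.mem_coe, restrictScalars_mem, mem_orthogonal_singleton_iff_inner_right]
    exact (hS.inner_iterate_left n v x).symm.trans (hx _ (hSV.iterate n hv))
  exact mem_orthogonal_singleton_iff_inner_right.mp (hle hy)

def innerRealInvtSubmodule (S : E →L[ℂ] E) : Set (Submodule ℝ E) :=
  {V | V.IsInnerReal ∧ MapsTo S V V}

namespace innerRealInvtSubmodule

theorem sup_cyclicSpan_mem (hS : (S : E →ₗ[ℂ] E).IsSymmetric)
    (hV : V ∈ innerRealInvtSubmodule S) {x : E} (hx : ∀ v ∈ V, ⟪v, x⟫_ℂ = 0) :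
    V ⊔ cyclicSpan S x ∈ innerRealInvtSubmodule S :=
  ⟨hV.1.sup (isInnerReal_cyclicSpan hS x) (inner_cyclicSpan_eq_zero hS hV.2 hx),
    mapsTo_sup hV.2 (mapsTo_cyclicSpan S x)⟩

theorem topologicalClosure_mem (hV : V ∈ innerRealInvtSubmodule S) :
    V.topologicalClosure ∈ innerRealInvtSubmodule S :=
  ⟨hV.1.topologicalClosure, hV.2.closure S.continuous⟩

theorem exists_maximal (hS : (S : E →ₗ[ℂ] E).IsSymmetric) (ξ : E) :
    ∃ V, ξ ∈ V ∧ Maximal (· ∈ innerRealInvtSubmodule S) V := by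
  have hchain : ∀ c ⊆ innerRealInvtSubmodule S, IsChain (· ≤ ·) c → ∀ V ∈ c,
      ∃ ub ∈ innerRealInvtSubmodule S, ∀ W ∈ c, W ≤ ub := fun c hc hcc V hV =>
    ⟨sSup c, ⟨isInnerReal_sSup_of_directedOn ⟨V, hV⟩ hcc.directedOn fun W hW => (hc hW).1,
      mapsTo_sSup_of_directedOn ⟨V, hV⟩ hcc.directedOn fun W hW => (hc hW).2⟩,
      fun _ => le_sSup⟩
  obtain ⟨V, hle, hV⟩ := zorn_le_nonempty₀ _ hchain _
    ⟨isInnerReal_cyclicSpan hS ξ, mapsTo_cyclicSpan S ξ⟩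
  exact ⟨V, hle (self_mem_cyclicSpan S ξ), hV⟩

theorem isClosed_of_maximal (hV : Maximal (· ∈ innerRealInvtSubmodule S) V) :
    IsClosed (V : Set E) :=
  hV.eq_of_ge (topologicalClosure_mem hV.prop) V.le_topologicalClosure ▸
    V.isClosed_topologicalClosure

theorem isRealForm_of_maximal (hS : (S : E →ₗ[ℂ] E).IsSymmetric)
    (hV : Maximal (· ∈ innerRealInvtSubmodule S) V) : V.IsRealForm := by
  refine ⟨hV.prop.1, fun x hx => ?_⟩
  have hle : V ⊔ cyclicSpan S x ≤ V := hV.2 (sup_cyclicSpan_mem hS hV.prop hx) le_sup_left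
  exact inner_self_eq_zero.mp (hx x (hle (mem_sup_right (self_mem_cyclicSpan S x))))

end innerRealInvtSubmodule

end InnerReal

section ComplexToReal

variable {E E' : Type*} [NormedAddCommGroup E] [InnerProductSpace ℂ E]
  [NormedAddCommGroup E'] [InnerProductSpace ℂ E']

attribute [local instance] InnerProductSpace.complexToReal

theorem real_inner_I_smul_right (x y : E) : ⟪x, I • y⟫_ℝ = -(⟪x, y⟫_ℂ).im := by
  simp [real_inner_eq_re_inner ℂ, inner_smul_right]

theorem inner_eq_zero_iff_real_inner (x y : E) :
    ⟪x, y⟫_ℂ = 0 ↔ ⟪x, y⟫_ℝ = 0 ∧ ⟪x, I • y⟫_ℝ = 0 := by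
  rw [real_inner_I_smul_right, neg_eq_zero, real_inner_eq_re_inner ℂ, Complex.ext_iff]
  rfl

theorem LinearIsometry.inner_map_map_of_map_I_smul (C : E →ₗᵢ[ℝ] E')
    (hC : ∀ x, C (I • x) = -(I • C x)) (x y : E) : ⟪C x, C y⟫_ℂ = ⟪y, x⟫_ℂ := by
  rw [← inner_conj_symm y x]
  apply Complex.ext
  · rw [conj_re]
    exact C.inner_map_map x y
  · have h := C.inner_map_map x (I • y)
    rwa [hC, inner_neg_right, real_inner_I_smul_right, real_inner_I_smul_right, neg_neg,
      ← conj_im] at h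

namespace Submodule

variable {V : Submodule ℝ E}

theorem IsInnerReal.I_smul_mem_orthogonal (hV : V.IsInnerReal) {v : E} (hv : v ∈ V) :
    I • v ∈ Vᗮ :=
  (mem_orthogonal _ _).mpr fun u hu => by rw [real_inner_I_smul_right, hV u hu v hv, neg_zero]

namespace IsRealForm

variable [V.HasOrthogonalProjection]

theorem I_smul_mem_of_mem_orthogonal (hV : V.IsRealForm) {w : E} (hw : w ∈ Vᗮ) : I • w ∈ V := by
  set u := I • w - V.starProjection (I • w)
  have hu : u ∈ Vᗮ := V.sub_starProjection_mem_orthogonal (I • w)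
  have hIu : I • u ∈ Vᗮ := by
    have : I • u = -(w + I • V.starProjection (I • w)) := by
      simp only [u, smul_sub, smul_smul, I_mul_I, neg_one_smul]
      abel
    rw [this]
    exact neg_mem (add_mem hw (hV.isInnerReal.I_smul_mem_orthogonal (coe_mem _)))
  have hu0 : u = 0 := hV.eq_zero_of_forall_inner u fun v hv =>
    (inner_eq_zero_iff_real_inner v u).mpr
      ⟨inner_right_of_mem_orthogonal hv hu, inner_right_of_mem_orthogonal hv hIu⟩
  rw [sub_eq_zero.mp hu0]
  exact coe_mem _

theorem reflection_I_smul (hV : V.IsRealForm) (x : E) :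
    V.reflection (I • x) = -(I • V.reflection x) :=
  reflection_map_of_mapsTo_orthogonal (T := DistribSMul.toAddMonoidHom E I)
    (fun _ hv => hV.isInnerReal.I_smul_mem_orthogonal hv)
    (fun _ hw => hV.I_smul_mem_of_mem_orthogonal hw) x

theorem reflection_smul (hV : V.IsRealForm) (c : ℂ) (x : E) :
    V.reflection (c • x) = conj c • V.reflection x :=
  map_smul_of_map_I_smul hV.reflection_I_smul c x

theorem inner_reflection_reflection (hV : V.IsRealForm) (x y : E) :
    ⟪V.reflection x, V.reflection y⟫_ℂ = ⟪y, x⟫_ℂ :=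
  V.reflection.toLinearIsometry.inner_map_map_of_map_I_smul hV.reflection_I_smul x y

theorem mapsTo_orthogonal {F : Type*} [FunLike F E E] [LinearMapClass F ℂ E E] {T : F}
    (hV : V.IsRealForm) (hT : MapsTo T V V) : MapsTo T Vᗮ Vᗮ := by
  intro w hw
  have h : I • T (I • w) ∈ Vᗮ :=
    hV.isInnerReal.I_smul_mem_orthogonal (hT (hV.I_smul_mem_of_mem_orthogonal hw))
  rwa [map_smul, smul_smul, I_mul_I, neg_one_smul, neg_mem_iff] at h

end IsRealForm

end Submodule

end ComplexToReal

/-- for a self-adjoint operator `S` on a complex Hilbert space `𝔥` and a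
vector `ξ ∈ 𝔥`, there exists a complex conjugation `C` on `𝔥` (an anti-unitary
involution) with `Cξ = ξ` and `CS = SC`. -/
theorem stmt_18 {𝔥 : Type*} [NormedAddCommGroup 𝔥] [InnerProductSpace ℂ 𝔥]
    [CompleteSpace 𝔥] (S : 𝔥 →L[ℂ] 𝔥) (hS : IsSelfAdjoint S) (ξ : 𝔥) :
    ∃ C : 𝔥 → 𝔥,
      (∀ x y : 𝔥, C (x + y) = C x + C y)
        ∧ (∀ (c : ℂ) (x : 𝔥), C (c • x) = (starRingEnd ℂ c) • C x)
        ∧ (∀ x y : 𝔥, (inner ℂ (C x) (C y) : ℂ) = inner ℂ y x)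
        ∧ (∀ x : 𝔥, C (C x) = x)
        ∧ C ξ = ξ
        ∧ (∀ x : 𝔥, C (S x) = S (C x)) := by
  let : InnerProductSpace ℝ 𝔥 := .complexToReal
  obtain ⟨V, hξ, hV⟩ := innerRealInvtSubmodule.exists_maximal hS.isSymmetric ξ
  have hSV : MapsTo S V V := hV.prop.2
  have hVreal : V.IsRealForm := innerRealInvtSubmodule.isRealForm_of_maximal hS.isSymmetric hV
  have : CompleteSpace V := (innerRealInvtSubmodule.isClosed_of_maximal hV).completeSpace_coe
  exact ⟨V.reflection, map_add _, hVreal.reflection_smul, hVreal.inner_reflection_reflection,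
    V.reflection_reflection, V.reflection_mem_subspace_eq_self hξ,
    V.reflection_map_of_mapsTo hSV (hVreal.mapsTo_orthogonal hSV)⟩
end

section
/- Let A be a positivity-preserving bounded self-adjoint operator on L²(M, 𝔐, λ). If ‖A‖ is an eigenvalue of A, then there exists a normalized non-negative eigenfunction of A with eigenvalue ‖A‖. -/
/-!
Write `f = f⁺ - f⁻`, so that `|f| = f⁺ + f⁻`. Positivity preservation makes the cross terms
`⟪f⁺, A f⁻⟫` and `⟪f⁻, A f⁺⟫` non-negative, hence `⟪|f|, A|f|⟫ ≥ ⟪f, Af⟫ = ‖A‖‖f‖²`.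
The Rayleigh quotient of `|f|` therefore attains `‖A‖`, which forces `A|f| = ‖A‖|f|`;
normalizing `|f|` gives the eigenfunction.
-/

open MeasureTheory
open scoped RealInnerProductSpace

namespace ContinuousLinearMap

variable {E : Type*} [NormedAddCommGroup E] [InnerProductSpace ℝ E]

/-- Expanding `‖T x - ‖T‖ x‖²` shows that it is at most `0`. -/
theorem apply_eq_opNorm_smul_of_le_inner (T : E →L[ℝ] E) {x : E}
    (h : ‖T‖ * ‖x‖ ^ 2 ≤ ⟪x, T x⟫) : T x = ‖T‖ • x := by
  have hTx : ‖T x‖ ≤ ‖T‖ * ‖x‖ := T.le_opNorm x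
  have hsq : ‖T x - ‖T‖ • x‖ ^ 2 ≤ 0 := by
    rw [norm_sub_sq_real, real_inner_smul_right, real_inner_comm, norm_smul,
      Real.norm_of_nonneg (norm_nonneg T)]
    nlinarith [norm_nonneg (T x), norm_nonneg T, norm_nonneg x]
  rw [← sub_eq_zero, ← norm_eq_zero]
  nlinarith [norm_nonneg (T x - ‖T‖ • x)]

end ContinuousLinearMap

namespace MeasureTheory.L2

variable {M : Type*} [MeasurableSpace M] {lam : Measure M}

theorem inner_nonneg {u v : Lp ℝ 2 lam} (hu : 0 ≤ u) (hv : 0 ≤ v) : 0 ≤ ⟪u, v⟫ := by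
  rw [L2.inner_def]
  refine integral_nonneg_of_ae ?_
  filter_upwards [(Lp.coeFn_nonneg u).2 hu, (Lp.coeFn_nonneg v).2 hv] with a hua hva
  simpa using mul_nonneg hva hua

theorem inner_apply_le_inner_abs_apply_abs (A : Lp ℝ 2 lam →L[ℝ] Lp ℝ 2 lam)
    (hA : ∀ f, 0 ≤ f → 0 ≤ A f) (f : Lp ℝ 2 lam) : ⟪f, A f⟫ ≤ ⟪|f|, A |f|⟫ := by
  have hcross : ∀ p n,
      ⟪p + n, A (p + n)⟫ = ⟪p - n, A (p - n)⟫ + 2 * ⟪p, A n⟫ + 2 * ⟪n, A p⟫ := by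
    intro p n
    simp only [map_add, map_sub, inner_add_left, inner_add_right, inner_sub_left,
      inner_sub_right]
    ring
  rw [← posPart_add_negPart f, hcross, posPart_sub_negPart f]
  have h₁ := inner_nonneg (posPart_nonneg f) (hA _ (negPart_nonneg f))
  have h₂ := inner_nonneg (negPart_nonneg f) (hA _ (posPart_nonneg f))
  linarith

end MeasureTheory.L2

theorem stmt_19_general {M : Type*} [MeasurableSpace M] (lam : Measure M)
    (A : Lp ℝ 2 lam →L[ℝ] Lp ℝ 2 lam)
    (hpos : ∀ f : Lp ℝ 2 lam, 0 ≤ᵐ[lam] ⇑f → 0 ≤ᵐ[lam] ⇑(A f))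
    (f : Lp ℝ 2 lam) (hf : f ≠ 0) (hef : A f = ‖A‖ • f) :
    ∃ g : Lp ℝ 2 lam, ‖g‖ = 1 ∧ (0 ≤ᵐ[lam] ⇑g) ∧ A g = ‖A‖ • g := by
  have hA : ∀ u, 0 ≤ u → 0 ≤ A u := fun u hu =>
    (Lp.coeFn_nonneg _).1 (hpos u ((Lp.coeFn_nonneg u).2 hu))
  have habs : A |f| = ‖A‖ • |f| := by
    refine A.apply_eq_opNorm_smul_of_le_inner ?_
    calc ‖A‖ * ‖|f|‖ ^ 2 = ⟪f, A f⟫ := by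
          rw [norm_abs_eq_norm, hef, real_inner_smul_right, real_inner_self_eq_norm_sq]
      _ ≤ ⟪|f|, A |f|⟫ := L2.inner_apply_le_inner_abs_apply_abs A hA f
  refine ⟨‖f‖⁻¹ • |f|, ?_, ?_, ?_⟩
  · rw [norm_smul, norm_abs_eq_norm, norm_inv, norm_norm,
      inv_mul_cancel₀ (norm_ne_zero_iff.2 hf)]
  · filter_upwards [Lp.coeFn_smul ‖f‖⁻¹ |f|, (Lp.coeFn_nonneg |f|).2 (abs_nonneg f)]
      with a hsmul habs_nonneg
    rw [hsmul]
    exact smul_nonneg (inv_nonneg.2 (norm_nonneg f)) habs_nonneg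
  · rw [map_smul, habs, smul_comm]

/-- a positivity-preserving bounded self-adjoint operator `A` on
`L²(M, λ)` that has `‖A‖` as an eigenvalue admits a normalized non-negative
eigenfunction with eigenvalue `‖A‖`. -/
theorem stmt_19 {M : Type*} [MeasurableSpace M] (lam : Measure M)
    (A : Lp ℝ 2 lam →L[ℝ] Lp ℝ 2 lam) (hA : IsSelfAdjoint A)
    (hpos : ∀ f : Lp ℝ 2 lam, 0 ≤ᵐ[lam] ⇑f → 0 ≤ᵐ[lam] ⇑(A f))
    (f : Lp ℝ 2 lam) (hf : f ≠ 0) (hef : A f = ‖A‖ • f) :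
    ∃ g : Lp ℝ 2 lam, ‖g‖ = 1 ∧ (0 ≤ᵐ[lam] ⇑g) ∧ A g = ‖A‖ • g :=
  stmt_19_general lam A hpos f hf hef
end
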